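/- arXiv:2103.02201 — 3 statements merged into one kernel-verified Lean document; each statement's English description precedes it below -/
import Mathlib

section
/- Let N, Q be unit vectors in ℝ³ with Q not parallel to N, and let S be a unit vector on the great circle orthogonal to M := Q × N (i.e., M · S = 0) with S ∉ {±N, ±Q}. If (Q × S) · (S × N) > 0, then for all sufficiently small θ > 0, N · (R(S,θ)Q − Q) > 0 (the finite rotation detaches the contact); if (Q × S) · (S × N) < 0, then for all sufficiently small θ > 0, N · (R(S,θ)Q − Q) < 0 (the finite rotation penetrates the constraint). -/
/-! On the great circle `(Q ×₃ N) ⬝ᵥ S = 0` the first-order term `sin θ · N ⬝ᵥ (S ×₃ Q)` of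
the normal displacement vanishes, and by Binet–Cauchy the second-order term
`(1 - cos θ) · ((S ⬝ᵥ Q) (S ⬝ᵥ N) - Q ⬝ᵥ N)` equals `(1 - cos θ) · (Q ×₃ S) ⬝ᵥ (S ×₃ N)` for unit `S`; since `1 - cos θ > 0` for `0 < θ < π`, the sign of
`(Q ×₃ S) ⬝ᵥ (S ×₃ N)` decides. -/

open Matrix

/-- Rotation about the axis `S` (unit vector) by angle `θ` (Rodrigues' formula). -/
noncomputable def rot (S : Fin 3 → ℝ) (θ : ℝ) (Q : Fin 3 → ℝ) : Fin 3 → ℝ :=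
  Real.cos θ • Q + Real.sin θ • (S ⨯₃ Q) + ((1 - Real.cos θ) * (S ⬝ᵥ Q)) • S

open Real

lemma dotProduct_rot_sub {S : Fin 3 → ℝ} (hS : S ⬝ᵥ S = 1) (N Q : Fin 3 → ℝ) (θ : ℝ) :
    N ⬝ᵥ (rot S θ Q - Q) =
      sin θ * (N ⬝ᵥ S ⨯₃ Q) + (1 - cos θ) * ((Q ⨯₃ S) ⬝ᵥ (S ⨯₃ N)) := by
  rw [cross_dot_cross, hS, dotProduct_comm Q S, dotProduct_comm Q N]
  simp only [rot, dotProduct_sub, dotProduct_add, dotProduct_smul, smul_eq_mul,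
    dotProduct_comm N S]
  ring

lemma dotProduct_rot_sub_of_dotProduct_cross_eq_zero {N Q S : Fin 3 → ℝ} (hS : S ⬝ᵥ S = 1)
    (hM : (Q ⨯₃ N) ⬝ᵥ S = 0) (θ : ℝ) :
    N ⬝ᵥ (rot S θ Q - Q) = (1 - cos θ) * ((Q ⨯₃ S) ⬝ᵥ (S ⨯₃ N)) := by
  have h_first_order : N ⬝ᵥ S ⨯₃ Q = 0 := by
    rw [triple_product_permutation, dotProduct_comm, hM]
  rw [dotProduct_rot_sub hS, h_first_order, mul_zero, zero_add]

lemma one_sub_cos_pos {θ : ℝ} (h0 : 0 < θ) (hπ : θ < π) : 0 < 1 - cos θ := by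
  simpa using cos_lt_cos_of_nonneg_of_le_pi le_rfl hπ.le h0

theorem finite_rotation_boundary_sign_general (N Q S : Fin 3 → ℝ)
    (hS : S ⬝ᵥ S = 1)
    (hM : (Q ⨯₃ N) ⬝ᵥ S = 0) :
    ((Q ⨯₃ S) ⬝ᵥ (S ⨯₃ N) > 0 →
      ∃ ε > (0 : ℝ), ∀ θ : ℝ, 0 < θ → θ < ε → N ⬝ᵥ (rot S θ Q - Q) > 0) ∧
    ((Q ⨯₃ S) ⬝ᵥ (S ⨯₃ N) < 0 →
      ∃ ε > (0 : ℝ), ∀ θ : ℝ, 0 < θ → θ < ε → N ⬝ᵥ (rot S θ Q - Q) < 0) := by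
  refine ⟨fun h => ⟨π, pi_pos, fun θ h0 hπ => ?_⟩, fun h => ⟨π, pi_pos, fun θ h0 hπ => ?_⟩⟩ <;>
    rw [dotProduct_rot_sub_of_dotProduct_cross_eq_zero hS hM]
  · exact mul_pos (one_sub_cos_pos h0 hπ) h
  · exact mul_neg_of_pos_of_neg (one_sub_cos_pos h0 hπ) h

/-- Theorem 1 of the paper: for unit vectors `N`, `Q` not parallel,
and a unit axis `S` on the great circle orthogonal to `M = Q ×₃ N` with
`S ∉ {±N, ±Q}`: if `(Q ×₃ S) ⬝ᵥ (S ×₃ N) > 0` then small finite rotations detach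
the contact (`N ⬝ᵥ (R(S,θ)Q - Q) > 0`), and if `(Q ×₃ S) ⬝ᵥ (S ×₃ N) < 0` they
penetrate the constraint (`N ⬝ᵥ (R(S,θ)Q - Q) < 0`). -/
theorem finite_rotation_boundary_sign (N Q S : Fin 3 → ℝ)
    (hN : N ⬝ᵥ N = 1) (hQ : Q ⬝ᵥ Q = 1) (hS : S ⬝ᵥ S = 1)
    (hnpar : ¬ ∃ c : ℝ, Q = c • N)
    (hM : (Q ⨯₃ N) ⬝ᵥ S = 0)
    (hSN : S ≠ N) (hSN' : S ≠ -N) (hSQ : S ≠ Q) (hSQ' : S ≠ -Q) :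
    ((Q ⨯₃ S) ⬝ᵥ (S ⨯₃ N) > 0 →
      ∃ ε > (0 : ℝ), ∀ θ : ℝ, 0 < θ → θ < ε → N ⬝ᵥ (rot S θ Q - Q) > 0) ∧
    ((Q ⨯₃ S) ⬝ᵥ (S ⨯₃ N) < 0 →
      ∃ ε > (0 : ℝ), ∀ θ : ℝ, 0 < θ → θ < ε → N ⬝ᵥ (rot S θ Q - Q) < 0) :=
  finite_rotation_boundary_sign_general N Q S hS hM
end

section
/- Any intersection of finitely many closed hemispheres {S ∈ S² : Mᵢ · S ≥ 0} (Mᵢ ≠ 0) of the unit sphere S² in ℝ³ falls into exactly one of the following topological categories: (1) it has nonempty interior in S² (a spherical polygonal region, possibly all of S²), (2) it is a nonempty subset of a single great circle, or (3) it is empty. -/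
/-!
The hemispheres cut the sphere out of the closed convex cone `K = {S | Mᵢ ⬝ᵥ S ≥ 0}`. If `K` has
interior, that interior is again a cone, so its radial projection is a nonempty relatively open
piece of the sphere inside the intersection. Otherwise the convex set `K ∋ 0` spans a proper
subspace and hence lies in a plane `M ⬝ᵥ S = 0`, which puts the intersection in category (2) or
(3). The categories are exclusive because an open piece of the sphere never lies in a great
circle.
-/

open Filter Topology Pointwise

section

variable {ι : Type*} [Fintype ι]

noncomputable def sphereProj (x : ι → ℝ) : ι → ℝ := (√(x ⬝ᵥ x))⁻¹ • x

lemma dotProduct_self_pos {x : ι → ℝ} (hx : x ≠ 0) : 0 < x ⬝ᵥ x :=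
  (Fintype.sum_nonneg fun i => mul_self_nonneg (x i)).lt_of_ne'
    (dotProduct_self_eq_zero.not.mpr hx)

lemma inv_sqrt_dotProduct_self_pos {x : ι → ℝ} (hx : x ≠ 0) : 0 < (√(x ⬝ᵥ x))⁻¹ := by
  have := dotProduct_self_pos hx
  positivity

lemma sphereProj_dotProduct_self {x : ι → ℝ} (hx : x ≠ 0) :
    sphereProj x ⬝ᵥ sphereProj x = 1 := by
  have hpos := dotProduct_self_pos hx
  simp only [sphereProj, smul_dotProduct, dotProduct_smul, smul_eq_mul]
  field_simp
  exact (Real.sq_sqrt hpos.le).symm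

lemma sphereProj_eq_self {x : ι → ℝ} (hx : x ⬝ᵥ x = 1) : sphereProj x = x := by
  simp [sphereProj, hx]

lemma continuousAt_sphereProj {x : ι → ℝ} (hx : x ≠ 0) : ContinuousAt sphereProj x := by
  have hdot : Continuous fun y : ι → ℝ => y ⬝ᵥ y := by fun_prop
  exact ((Real.continuous_sqrt.comp hdot).continuousAt.inv₀
    (Real.sqrt_pos.mpr (dotProduct_self_pos hx)).ne').smul continuousAt_id

lemma not_inter_sphere_subset_hyperplane {U : Set (ι → ℝ)} (hU : IsOpen U)
    (hUS : (U ∩ {S | S ⬝ᵥ S = 1}).Nonempty) {M : ι → ℝ} (hM : M ≠ 0) :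
    ¬ U ∩ {S | S ⬝ᵥ S = 1} ⊆ {S | M ⬝ᵥ S = 0} := by
  intro hsub
  obtain ⟨S, hSU, hS⟩ := hUS
  have hMS : M ⬝ᵥ S = 0 := hsub ⟨hSU, hS⟩
  have hMM := (dotProduct_self_pos hM).ne'
  -- Tilt `S` towards `M` and project back to the sphere.
  have hMtilt (t : ℝ) : M ⬝ᵥ (S + t • M) = t * (M ⬝ᵥ M) := by
    simp [dotProduct_add, hMS]
  have hlim : Tendsto (fun t : ℝ => sphereProj (S + t • M)) (𝓝[≠] 0) (𝓝 S) := by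
    have hS0 : S ≠ 0 := by rintro rfl; simp at hS
    have hline : Tendsto (fun t : ℝ => S + t • M) (𝓝[≠] 0) (𝓝 S) := by
      have : Continuous fun t : ℝ => S + t • M := by fun_prop
      simpa using (this.tendsto 0).mono_left nhdsWithin_le_nhds
    simpa only [Function.comp_def, sphereProj_eq_self hS] using
      (continuousAt_sphereProj hS0).tendsto.comp hline
  obtain ⟨t, htU, ht0 : t ≠ 0⟩ :=
    ((hlim.eventually (hU.mem_nhds hSU)).and self_mem_nhdsWithin).exists
  have hne : S + t • M ≠ 0 := fun h => mul_ne_zero ht0 hMM (by rw [← hMtilt, h, dotProduct_zero])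
  have hzero := hsub ⟨htU, sphereProj_dotProduct_self hne⟩
  simp only [Set.mem_ofPred_eq, sphereProj, dotProduct_smul, smul_eq_mul, hMtilt] at hzero
  exact mul_ne_zero (inv_sqrt_dotProduct_self_pos hne).ne' (mul_ne_zero ht0 hMM) hzero

lemma exists_dotProduct_self_eq_one_mem_interior [Nonempty ι] {K : Set (ι → ℝ)}
    (hK : ∀ c : ℝ, 0 < c → ∀ x ∈ K, c • x ∈ K) (hint : (interior K).Nonempty) :
    ∃ S ∈ interior K, S ⬝ᵥ S = 1 := by
  obtain ⟨x, hxK, hx0 : x ≠ 0⟩ :=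
    (dense_compl_singleton (0 : ι → ℝ)).inter_open_nonempty _ isOpen_interior hint
  refine ⟨sphereProj x, ?_, sphereProj_dotProduct_self hx0⟩
  set c := (√(x ⬝ᵥ x))⁻¹
  have hc := inv_sqrt_dotProduct_self_pos hx0
  have hcK : c • K ⊆ K := by
    rintro _ ⟨y, hy, rfl⟩
    exact hK c hc y hy
  exact interior_mono hcK (interior_smul₀ hc.ne' K ▸ Set.smul_mem_smul_set hxK)

lemma exists_dotProduct_eq_zero_of_interior_eq_empty {K : Set (ι → ℝ)} (hK : Convex ℝ K)
    (h0 : 0 ∈ K) (hint : interior K = ∅) : ∃ M ≠ 0, ∀ x ∈ K, M ⬝ᵥ x = 0 := by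
  classical
  have hspan : vectorSpan ℝ K < ⊤ := by
    rw [lt_top_iff_ne_top, Ne,
      ← AffineSubspace.affineSpan_eq_top_iff_vectorSpan_eq_top_of_nonempty ℝ _ _ ⟨0, h0⟩,
      ← hK.interior_nonempty_iff_affineSpan_eq_top, hint]
    exact Set.not_nonempty_empty
  obtain ⟨f, hf, hKf⟩ := (vectorSpan ℝ K).exists_le_ker_of_lt_top hspan
  refine ⟨(dotProductEquiv ℝ ι).symm f, by simpa using hf, fun x hx => ?_⟩
  rw [← dotProductEquiv_apply_apply, LinearEquiv.apply_symm_apply]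
  exact hKf (by simpa using vsub_mem_vectorSpan ℝ hx h0)

variable {κ : Type*} (Ms : κ → ι → ℝ)

lemma convex_iInter_dotProduct_nonneg : Convex ℝ (⋂ k, {S : ι → ℝ | Ms k ⬝ᵥ S ≥ 0}) :=
  convex_iInter fun k =>
    convex_halfSpace_ge ⟨dotProduct_add (Ms k), fun c x => dotProduct_smul c (Ms k) x⟩ 0

lemma smul_mem_iInter_dotProduct_nonneg {c : ℝ} (hc : 0 < c) {x : ι → ℝ}
    (hx : x ∈ ⋂ k, {S : ι → ℝ | Ms k ⬝ᵥ S ≥ 0}) : c • x ∈ ⋂ k, {S : ι → ℝ | Ms k ⬝ᵥ S ≥ 0} := by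
  simp only [Set.mem_iInter, Set.mem_ofPred_eq, dotProduct_smul, smul_eq_mul] at hx ⊢
  exact fun k => mul_nonneg hc.le (hx k)

end

theorem hemisphere_intersection_classification_general (n : ℕ)
    (Ms : Fin n → (Fin 3 → ℝ))
    (C : Set (Fin 3 → ℝ))
    (hC : C = {S | S ⬝ᵥ S = 1} ∩ ⋂ i : Fin n, {S | Ms i ⬝ᵥ S ≥ 0}) :
    letI P₁ : Prop := ∃ U : Set (Fin 3 → ℝ), IsOpen U ∧
      (U ∩ {S | S ⬝ᵥ S = 1}).Nonempty ∧ U ∩ {S | S ⬝ᵥ S = 1} ⊆ C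
    letI P₂ : Prop := C.Nonempty ∧
      ∃ M : Fin 3 → ℝ, M ≠ 0 ∧ C ⊆ {S | M ⬝ᵥ S = 0}
    letI P₃ : Prop := C = ∅
    (P₁ ∨ P₂ ∨ P₃) ∧ ¬(P₁ ∧ P₂) ∧ ¬(P₁ ∧ P₃) ∧ ¬(P₂ ∧ P₃) := by
  set K := ⋂ i : Fin n, {S : Fin 3 → ℝ | Ms i ⬝ᵥ S ≥ 0}
  refine ⟨?_, ?_, ?_, ?_⟩
  · rcases C.eq_empty_or_nonempty with hE | hne
    · exact .inr (.inr hE)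
    by_cases hint : (interior K).Nonempty
    · obtain ⟨S, hSK, hS⟩ := exists_dotProduct_self_eq_one_mem_interior
        (fun c hc x hx => smul_mem_iInter_dotProduct_nonneg Ms hc hx) hint
      exact .inl ⟨interior K, isOpen_interior, ⟨S, hSK, hS⟩,
        fun x hx => hC ▸ ⟨hx.2, interior_subset hx.1⟩⟩
    · obtain ⟨M, hM, hKM⟩ := exists_dotProduct_eq_zero_of_interior_eq_empty
        (convex_iInter_dotProduct_nonneg Ms) (by simp) (Set.not_nonempty_iff_eq_empty.mp hint)
      exact .inr (.inl ⟨hne, M, hM, fun x hx => hKM x (hC ▸ hx).2⟩)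
  · rintro ⟨⟨U, hU, hUS, hUC⟩, -, M, hM, hCM⟩
    exact not_inter_sphere_subset_hyperplane hU hUS hM (hUC.trans hCM)
  · rintro ⟨⟨U, -, ⟨S, hS⟩, hUC⟩, hE⟩
    exact (hE ▸ hUC hS : S ∈ (∅ : Set _))
  · rintro ⟨⟨hne, -⟩, hE⟩
    exact hne.ne_empty hE

/-- Theorem 3 of the paper: any intersection of finitely many
closed hemispheres of the unit sphere S² falls into exactly one of three
categories: (1) nonempty interior in S² (spherical polygonal region),
(2) a nonempty subset of a single great circle, or (3) empty. -/
theorem hemisphere_intersection_classification (n : ℕ)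
    (Ms : Fin n → (Fin 3 → ℝ)) (hMs : ∀ i, Ms i ≠ 0)
    (C : Set (Fin 3 → ℝ))
    (hC : C = {S | S ⬝ᵥ S = 1} ∩ ⋂ i : Fin n, {S | Ms i ⬝ᵥ S ≥ 0}) :
    letI P₁ : Prop := ∃ U : Set (Fin 3 → ℝ), IsOpen U ∧
      (U ∩ {S | S ⬝ᵥ S = 1}).Nonempty ∧ U ∩ {S | S ⬝ᵥ S = 1} ⊆ C
    letI P₂ : Prop := C.Nonempty ∧
      ∃ M : Fin 3 → ℝ, M ≠ 0 ∧ C ⊆ {S | M ⬝ᵥ S = 0}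
    letI P₃ : Prop := C = ∅
    (P₁ ∨ P₂ ∨ P₃) ∧ ¬(P₁ ∧ P₂) ∧ ¬(P₁ ∧ P₃) ∧ ¬(P₂ ∧ P₃) :=
  hemisphere_intersection_classification_general n Ms C hC
end

section
/- If the intersection C of finitely many closed hemispheres of S² has empty interior in S² and is nonempty, then C is contained in some great circle {S ∈ S² : M · S = 0} with M ≠ 0. -/
open Matrix

/-- if a nonempty intersection `C` of finitely many closed
hemispheres of the unit sphere S² has empty interior in S², then `C` is
contained in some great circle `{S ∈ S² : M ⬝ᵥ S = 0}` with `M ≠ 0`. -/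
theorem empty_interior_subset_great_circle (n : ℕ)
    (Ms : Fin n → (Fin 3 → ℝ)) (hMs : ∀ i, Ms i ≠ 0)
    (C : Set (Fin 3 → ℝ))
    (hC : C = {S | S ⬝ᵥ S = 1} ∩ ⋂ i : Fin n, {S | Ms i ⬝ᵥ S ≥ 0})
    (hne : C.Nonempty)
    (hint : ¬ ∃ U : Set (Fin 3 → ℝ), IsOpen U ∧
      (U ∩ {S | S ⬝ᵥ S = 1}).Nonempty ∧ U ∩ {S | S ⬝ᵥ S = 1} ⊆ C) :
    ∃ M : Fin 3 → ℝ, M ≠ 0 ∧ C ⊆ {S | S ⬝ᵥ S = 1 ∧ M ⬝ᵥ S = 0} := by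
  by_cases hn : ∃ i, ∀ S ∈ C, Ms i ⬝ᵥ S = 0
  · obtain ⟨i, hi⟩ := hn
    exact ⟨Ms i, hMs i, fun S hS => ⟨(hC ▸ hS).1, hi S hS⟩⟩
  push_neg at hn
  exfalso
  apply hint
  have hcont : ∀ i : Fin n, Continuous fun S : Fin 3 → ℝ => Ms i ⬝ᵥ S := by
    intro i
    unfold dotProduct
    exact continuous_finset_sum _ fun x _ => continuous_const.mul (continuous_apply x)
  -- each point of C satisfies all the inequalities
  have hge : ∀ S ∈ C, ∀ i, 0 ≤ Ms i ⬝ᵥ S := by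
    intro S hS i
    rw [hC] at hS
    exact Set.mem_iInter.1 hS.2 i
  refine ⟨⋂ i, {S | 0 < Ms i ⬝ᵥ S},
    isOpen_iInter_of_finite fun i => isOpen_lt continuous_const (hcont i), ?_, ?_⟩
  · rcases Nat.eq_zero_or_pos n with h0 | hpos
    · obtain ⟨S, hS⟩ := hne
      refine ⟨S, Set.mem_iInter.2 fun i => ?_, (hC ▸ hS).1⟩
      exact absurd i.isLt (by omega)
    · choose T hTC hTne using hn
      set x : Fin 3 → ℝ := ∑ i, T i with hx
      have hxpos : ∀ j, 0 < Ms j ⬝ᵥ x := by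
        intro j
        have : Ms j ⬝ᵥ x = ∑ i, Ms j ⬝ᵥ T i := by
          simp only [hx, dotProduct, Finset.sum_apply, Finset.mul_sum]
          exact Finset.sum_comm
        rw [this]
        apply Finset.sum_pos'
        · exact fun i _ => hge _ (hTC i) j
        · exact ⟨j, Finset.mem_univ j,
            lt_of_le_of_ne (hge _ (hTC j) j) (Ne.symm (hTne j))⟩
      have hx0 : x ≠ 0 := by
        intro h
        have := hxpos ⟨0, hpos⟩
        simp [h] at this
      have hxx : 0 < x ⬝ᵥ x := by
        have hnn : 0 ≤ x ⬝ᵥ x := Finset.sum_nonneg fun k _ => mul_self_nonneg _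
        rcases lt_or_eq_of_le hnn with h | h
        · exact h
        · exact absurd ((dotProduct_self_eq_zero).1 h.symm) hx0
      set c : ℝ := (Real.sqrt (x ⬝ᵥ x))⁻¹ with hc
      have hcpos : 0 < c := inv_pos.2 (Real.sqrt_pos.2 hxx)
      refine ⟨c • x, Set.mem_iInter.2 fun i => ?_, ?_⟩
      · show 0 < Ms i ⬝ᵥ (c • x)
        rw [dotProduct_smul]
        exact mul_pos hcpos (hxpos i)
      · show (c • x) ⬝ᵥ (c • x) = 1
        rw [smul_dotProduct, dotProduct_smul, smul_eq_mul, smul_eq_mul]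
        rw [hc]
        rw [← mul_assoc, ← mul_inv, Real.mul_self_sqrt hxx.le]
        exact inv_mul_cancel₀ hxx.ne'
  · rintro S ⟨hU, hsph⟩
    rw [hC]
    refine ⟨hsph, Set.mem_iInter.2 fun i => ?_⟩
    have : (0:ℝ) < Ms i ⬝ᵥ S := Set.mem_iInter.1 hU i
    exact this.le
end
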